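/- For every α ∈ (0,2) and every integer n ≥ 1, with β = 2−α and μ_n = nπ/2 − βπ/8, one has | ∫_{−1}^{1} ( sin(μ_n(x+1) + βπ/8) )² dx − 1 | ≤ π·β/(8·μ_n). -/
import Mathlib


open MeasureTheory Real Set
open scoped ENNReal NNReal

/-- The density `γ` from Kwaśnicki's formula for eigenfunctions on the half-line;
the integrand in the exponent has a removable singularity at `r = 1/s` (a single point,
hence negligible for the Lebesgue integral). -/
noncomputable def gammaFn (α : ℝ) (s : ℝ) : ℝ :=
  Real.sqrt (2 * α) * Real.sin (α * π / 2) / (2 * π) *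
      (s ^ α / (1 + s ^ (2 * α) - 2 * s ^ α * Real.cos (α * π / 2))) *
    Real.exp ((1 / π) * ∫ r in Set.Ioi (0 : ℝ),
      (1 + r ^ 2)⁻¹ * Real.log ((1 - r ^ α * s ^ α) / (1 - r ^ 2 * s ^ 2)))

/-- `G` is the Laplace transform of `γ`. -/
noncomputable def GFn (α : ℝ) (s : ℝ) : ℝ :=
  ∫ t in Set.Ioi (0 : ℝ), Real.exp (-s * t) * gammaFn α t

/-- The generalized eigenfunction profile on the half-line:
`F(s) = sin(s + (2−α)π/8) − G(s)` for `s > 0`, and `F(s) = 0` for `s ≤ 0`. -/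
noncomputable def FFn (α : ℝ) (s : ℝ) : ℝ :=
  if 0 < s then Real.sin (s + (2 - α) * π / 8) - GFn α s else 0

/-- The auxiliary cut-off function `q`. -/
noncomputable def qFn (x : ℝ) : ℝ :=
  if x ≤ -(1/3) then 0
  else if x ≤ 0 then 9/2 * (x + 1/3) ^ 2
  else if x ≤ 1/3 then 1 - 9/2 * (x - 1/3) ^ 2
  else 1

/-- `μ_n = nπ/2 − (2−α)π/8`. -/
noncomputable def muN (α : ℝ) (n : ℕ) : ℝ := n * π / 2 - (2 - α) * π / 8

/-- The approximate eigenfunction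
`φ̃_n(x) = q(−x)·F(μ_n(1+x)) + (−1)^n·q(x)·F(μ_n(1−x))`. -/
noncomputable def phiTilde (α : ℝ) (n : ℕ) (x : ℝ) : ℝ :=
  qFn (-x) * FFn α (muN α n * (1 + x)) + (-1 : ℝ) ^ n * qFn x * FFn α (muN α n * (1 - x))

/-- **The sine squared integral is close to 1.** For `α ∈ (0,2)` and `n ≥ 1`, with
`β = 2−α` and `μ_n = nπ/2 − βπ/8`,
`|∫_{−1}^{1} sin²(μ_n(x+1) + βπ/8) dx − 1| ≤ πβ/(8μ_n)`. -/
theorem sin_sq_integral_close_to_one (α : ℝ) (hα : α ∈ Set.Ioo (0 : ℝ) 2)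
    (n : ℕ) (hn : 1 ≤ n) :
    |(∫ x in Set.Ioo (-1 : ℝ) 1,
        (Real.sin (muN α n * (x + 1) + (2 - α) * π / 8)) ^ 2) - 1| ≤
      π * (2 - α) / (8 * muN α n) := by
  obtain ⟨hα0, hα2⟩ := hα
  set μ := muN α n with hμdef
  set c : ℝ := (2 - α) * π / 8 with hcdef
  have hc0 : 0 ≤ c := by
    rw [hcdef]
    nlinarith [Real.pi_pos]
  have hμpos : 0 < μ := by
    have hn1 : (1 : ℝ) ≤ (n : ℝ) := by exact_mod_cast hn
    have hπ := Real.pi_pos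
    have : c < π / 2 := by
      rw [hcdef]; nlinarith
    have : μ = n * π / 2 - c := rfl
    nlinarith
  have key : (∫ x in Set.Ioo (-1 : ℝ) 1,
      (Real.sin (μ * (x + 1) + c)) ^ 2) = 1 + Real.sin c * Real.cos c / μ := by
    rw [← MeasureTheory.integral_Ioc_eq_integral_Ioo,
      ← intervalIntegral.integral_of_le (by norm_num : (-1 : ℝ) ≤ 1)]
    have hre : ∀ x : ℝ, (Real.sin (μ * (x + 1) + c)) ^ 2
        = (fun u => Real.sin u ^ 2) (μ * x + (μ + c)) := by
      intro x; simp only; ring_nf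
    simp_rw [hre]
    rw [intervalIntegral.integral_comp_mul_add (fun u => Real.sin u ^ 2) hμpos.ne' (μ + c),
      integral_sin_sq]
    have ha : μ * (-1) + (μ + c) = c := by ring
    have hb : μ * 1 + (μ + c) = n * π - c := by
      have : μ = n * π / 2 - c := rfl
      rw [this]; ring
    rw [ha, hb, Real.sin_nat_mul_pi_sub, Real.cos_nat_mul_pi_sub]
    have h2n : ((-1 : ℝ) ^ n) * ((-1 : ℝ) ^ n) = 1 := by
      rw [← pow_add]; exact Even.neg_one_pow ⟨n, rfl⟩
    have hexp : (Real.sin c * Real.cos c -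
        -((-1 : ℝ) ^ n * Real.sin c) * ((-1 : ℝ) ^ n * Real.cos c) + ((n : ℝ) * π - c) - c) / 2
        = Real.sin c * Real.cos c + μ := by
      have hμeq : μ = (n : ℝ) * π / 2 - c := rfl
      rw [hμeq]
      linear_combination (Real.sin c * Real.cos c / 2) * h2n
    rw [smul_eq_mul, hexp]
    field_simp
    ring
  rw [key]
  have hsin : |Real.sin c * Real.cos c| ≤ c := by
    calc |Real.sin c * Real.cos c| = |Real.sin c| * |Real.cos c| := abs_mul _ _
    _ ≤ |c| * 1 :=
        mul_le_mul Real.abs_sin_le_abs (Real.abs_cos_le_one c) (abs_nonneg _) (abs_nonneg _)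
    _ = c := by rw [mul_one, abs_of_nonneg hc0]
  have hrhs : π * (2 - α) / (8 * μ) = c / μ := by rw [hcdef]; ring
  rw [hrhs]
  have : |1 + Real.sin c * Real.cos c / μ - 1| = |Real.sin c * Real.cos c| / μ := by
    rw [add_sub_cancel_left, abs_div, abs_of_pos hμpos]
  rw [this]
  gcongr
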